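/- Let τ, σ ∈ H¹(𝕋¹; ℝ³) satisfy min_x |τ(x)| ≥ 1/C and min_x |σ(x)| ≥ 1/C for some finite C > 0, and define A_τ := Id - (1/2π)∫_{𝕋¹} (τ⊗τ)/|τ|² dx. Then the operator norm estimate ‖A_τ - A_σ‖_op ≤ 2C²·‖τ+σ‖_{L²(𝕋¹)}·‖τ-σ‖_{L²(𝕋¹)} holds. -/

import Mathlib

open MeasureTheory Real

/-- The matrix `A_τ = Id - (1/2π)∫ τ⊗τ/|τ|²`, viewed as the linear action
`v ↦ v - (1/2π)∫ (⟨τ(x),v⟩/|τ(x)|²)·τ(x) dx`. -/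
noncomputable def Amap (τ : ℝ → EuclideanSpace ℝ (Fin 3))
    (v : EuclideanSpace ℝ (Fin 3)) : EuclideanSpace ℝ (Fin 3) :=
  v - (1 / (2 * π)) • ∫ x in (-π)..π, (((inner ℝ (τ x) v : ℝ)) / ‖τ x‖ ^ 2) • τ x

/-- Normalized `L²(𝕋¹)` norm. -/
noncomputable def L2norm (f : ℝ → EuclideanSpace ℝ (Fin 3)) : ℝ :=
  Real.sqrt ((1 / (2 * π)) * ∫ x in (-π)..π, ‖f x‖ ^ 2)

/-!
Pointwise, `P_a v := (⟪a, v⟫ / ‖a‖²) • a` satisfies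
`‖P_a v - P_b v‖ ≤ 2C² ‖a + b‖ ‖a - b‖ ‖v‖` when `‖a‖, ‖b‖ ≥ 1/C`: over the common
denominator `‖a‖²` the numerator is `⟪a, v⟫ a - ⟪b, v⟫ b
= ½ (⟪a + b, v⟫ (a - b) + ⟪a - b, v⟫ (a + b))`, and changing the denominator costs
`|‖a‖² - ‖b‖²| = |⟪a + b, a - b⟫|`. Since `A_τ v - A_σ v` is the average of `P_σ v - P_τ v`
over the circle, Cauchy–Schwarz for the average of `‖τ + σ‖ ‖τ - σ‖` finishes the proof.
-/

section CauchySchwarz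

variable {α : Type*} [MeasurableSpace α] {μ : Measure α}

theorem integral_mul_le_sqrt_integral_sq_mul_sqrt_integral_sq {f g : α → ℝ}
    (hf : Integrable (fun x ↦ f x ^ 2) μ) (hg : Integrable (fun x ↦ g x ^ 2) μ)
    (hfg : Integrable (fun x ↦ f x * g x) μ) :
    ∫ x, f x * g x ∂μ ≤ √(∫ x, f x ^ 2 ∂μ) * √(∫ x, g x ^ 2 ∂μ) := by
  have hquad : ∀ t : ℝ, 0 ≤ (∫ x, f x ^ 2 ∂μ) * (t * t) + (-2 * ∫ x, f x * g x ∂μ) * t +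
      ∫ x, g x ^ 2 ∂μ := by
    intro t
    have hexp : ∫ x, (t * f x - g x) ^ 2 ∂μ = (∫ x, f x ^ 2 ∂μ) * (t * t) +
        (-2 * ∫ x, f x * g x ∂μ) * t + ∫ x, g x ^ 2 ∂μ := by
      have hpt : (fun x ↦ (t * f x - g x) ^ 2) =
          fun x ↦ (t * t) * f x ^ 2 + (-2 * t) * (f x * g x) + g x ^ 2 := by
        funext x; ring
      rw [hpt, integral_add _ hg, integral_add (hf.const_mul _) (hfg.const_mul _),
        integral_const_mul, integral_const_mul]
      · ring
      · exact (hf.const_mul _).add (hfg.const_mul _)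
    rw [← hexp]
    exact integral_nonneg fun x ↦ sq_nonneg _
  have hdisc := discrim_le_zero hquad
  rw [discrim] at hdisc
  calc ∫ x, f x * g x ∂μ ≤ |∫ x, f x * g x ∂μ| := le_abs_self _
    _ ≤ √((∫ x, f x ^ 2 ∂μ) * ∫ x, g x ^ 2 ∂μ) := Real.abs_le_sqrt (by linarith)
    _ = √(∫ x, f x ^ 2 ∂μ) * √(∫ x, g x ^ 2 ∂μ) :=
      Real.sqrt_mul (integral_nonneg fun x ↦ sq_nonneg _) _

end CauchySchwarz

theorem average_norm_mul_norm_le_L2norm_mul_L2norm {f g : ℝ → EuclideanSpace ℝ (Fin 3)}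
    (hf : Continuous f) (hg : Continuous g) :
    (1 / (2 * π)) * ∫ x in (-π)..π, ‖f x‖ * ‖g x‖ ≤ L2norm f * L2norm g := by
  have hπ : -π ≤ π := by linarith [pi_pos]
  have hc : (0 : ℝ) ≤ 1 / (2 * π) := by positivity
  have hCS := integral_mul_le_sqrt_integral_sq_mul_sqrt_integral_sq
    (μ := volume.restrict (Set.Ioc (-π) π))
    ((hf.norm.pow 2).integrableOn_Ioc) ((hg.norm.pow 2).integrableOn_Ioc)
    ((hf.norm.mul hg.norm).integrableOn_Ioc)
  rw [← intervalIntegral.integral_of_le hπ, ← intervalIntegral.integral_of_le hπ,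
    ← intervalIntegral.integral_of_le hπ] at hCS
  rw [L2norm, L2norm, Real.sqrt_mul hc, Real.sqrt_mul hc,
    mul_mul_mul_comm, Real.mul_self_sqrt hc]
  exact mul_le_mul_of_nonneg_left hCS hc

section InnerProductSpace

variable {E : Type*} [NormedAddCommGroup E] [InnerProductSpace ℝ E]

theorem norm_inner_smul_sub_inner_smul_le (a b v : E) :
    ‖inner ℝ a v • a - inner ℝ b v • b‖ ≤ ‖a + b‖ * ‖a - b‖ * ‖v‖ := by
  have hpolar : inner ℝ a v • a - inner ℝ b v • b =
      (2 : ℝ)⁻¹ • (inner ℝ (a + b) v • (a - b) + inner ℝ (a - b) v • (a + b)) := by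
    rw [inner_add_left, inner_sub_left]
    module
  have h₁ : ‖inner ℝ (a + b) v • (a - b)‖ ≤ ‖a + b‖ * ‖a - b‖ * ‖v‖ := by
    rw [norm_smul, Real.norm_eq_abs]
    nlinarith [abs_real_inner_le_norm (a + b) v, norm_nonneg (a - b)]
  have h₂ : ‖inner ℝ (a - b) v • (a + b)‖ ≤ ‖a + b‖ * ‖a - b‖ * ‖v‖ := by
    rw [norm_smul, Real.norm_eq_abs]
    nlinarith [abs_real_inner_le_norm (a - b) v, norm_nonneg (a + b)]
  rw [hpolar, norm_smul, norm_inv, Real.norm_two]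
  linarith [norm_add_le (inner ℝ (a + b) v • (a - b)) (inner ℝ (a - b) v • (a + b))]

theorem abs_norm_sq_sub_norm_sq_le (a b : E) : |‖a‖ ^ 2 - ‖b‖ ^ 2| ≤ ‖a + b‖ * ‖a - b‖ := by
  have h : ‖a‖ ^ 2 - ‖b‖ ^ 2 = inner ℝ (a + b) (a - b) := by
    rw [inner_add_left, inner_sub_right, inner_sub_right, real_inner_self_eq_norm_sq,
      real_inner_self_eq_norm_sq, real_inner_comm a b]
    ring
  rw [h]
  exact abs_real_inner_le_norm _ _

theorem norm_inner_div_norm_sq_smul_sub_le {r : ℝ} (hr : 0 < r) {a b : E}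
    (ha : r ≤ ‖a‖) (hb : r ≤ ‖b‖) (v : E) :
    ‖(inner ℝ a v / ‖a‖ ^ 2) • a - (inner ℝ b v / ‖b‖ ^ 2) • b‖ ≤
      2 / r ^ 2 * ‖a + b‖ * ‖a - b‖ * ‖v‖ := by
  set X := ‖a + b‖ * ‖a - b‖ * ‖v‖
  have hA : r ^ 2 ≤ ‖a‖ ^ 2 := by gcongr
  have hB : 0 < ‖b‖ ^ 2 := by have := hr.trans_le hb; positivity
  have hA' : 0 < ‖a‖ ^ 2 := (pow_pos hr 2).trans_le hA
  have hsplit : (inner ℝ a v / ‖a‖ ^ 2) • a - (inner ℝ b v / ‖b‖ ^ 2) • b =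
      (‖a‖ ^ 2)⁻¹ • (inner ℝ a v • a - inner ℝ b v • b) +
        ((‖b‖ ^ 2 - ‖a‖ ^ 2) / (‖a‖ ^ 2 * ‖b‖ ^ 2) * inner ℝ b v) • b := by
    rw [← inv_sub_inv hA'.ne' hB.ne', div_eq_mul_inv, div_eq_mul_inv]
    module
  have h₁ : ‖(‖a‖ ^ 2)⁻¹ • (inner ℝ a v • a - inner ℝ b v • b)‖ ≤ X / ‖a‖ ^ 2 := by
    rw [norm_smul, norm_inv, Real.norm_of_nonneg hA'.le, inv_mul_eq_div]
    exact div_le_div_of_nonneg_right (norm_inner_smul_sub_inner_smul_le a b v) hA'.le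
  have h₂ : ‖((‖b‖ ^ 2 - ‖a‖ ^ 2) / (‖a‖ ^ 2 * ‖b‖ ^ 2) * inner ℝ b v) • b‖ ≤
      X / ‖a‖ ^ 2 := by
    rw [norm_smul, Real.norm_eq_abs, abs_mul, abs_div, abs_of_pos (mul_pos hA' hB),
      abs_sub_comm]
    calc |‖a‖ ^ 2 - ‖b‖ ^ 2| / (‖a‖ ^ 2 * ‖b‖ ^ 2) * |inner ℝ b v| * ‖b‖
        ≤ ‖a + b‖ * ‖a - b‖ / (‖a‖ ^ 2 * ‖b‖ ^ 2) * (‖b‖ * ‖v‖) * ‖b‖ := by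
          gcongr
          · exact abs_norm_sq_sub_norm_sq_le a b
          · exact abs_real_inner_le_norm b v
      _ = X / ‖a‖ ^ 2 := by
          have : ‖b‖ ≠ 0 := (hr.trans_le hb).ne'
          simp only [X]
          field_simp
  calc _ ≤ X / ‖a‖ ^ 2 + X / ‖a‖ ^ 2 := hsplit ▸ (norm_add_le _ _).trans (add_le_add h₁ h₂)
    _ ≤ X / r ^ 2 + X / r ^ 2 := by gcongr
    _ = 2 / r ^ 2 * ‖a + b‖ * ‖a - b‖ * ‖v‖ := by ring

theorem continuous_inner_div_norm_sq_smul {X : Type*} [TopologicalSpace X] {τ : X → E}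
    (hτ : Continuous τ) (hτ0 : ∀ x, τ x ≠ 0) (v : E) :
    Continuous fun x ↦ (inner ℝ (τ x) v / ‖τ x‖ ^ 2) • τ x :=
  ((hτ.inner continuous_const).div (hτ.norm.pow 2) fun x ↦ by simpa using hτ0 x).smul hτ

end InnerProductSpace

theorem Amap_sub_Amap {τ σ : ℝ → EuclideanSpace ℝ (Fin 3)} (hτ : Continuous τ)
    (hσ : Continuous σ) (hτ0 : ∀ x, τ x ≠ 0) (hσ0 : ∀ x, σ x ≠ 0)
    (v : EuclideanSpace ℝ (Fin 3)) :
    Amap τ v - Amap σ v = (1 / (2 * π)) • ∫ x in (-π)..π,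
      ((inner ℝ (σ x) v / ‖σ x‖ ^ 2) • σ x - (inner ℝ (τ x) v / ‖τ x‖ ^ 2) • τ x) := by
  rw [Amap, Amap, intervalIntegral.integral_sub
    ((continuous_inner_div_norm_sq_smul hσ hσ0 v).intervalIntegrable _ _)
    ((continuous_inner_div_norm_sq_smul hτ hτ0 v).intervalIntegrable _ _), smul_sub]
  abel

theorem stmt9_general (τ σ : ℝ → EuclideanSpace ℝ (Fin 3)) (C : ℝ) (hC : 0 < C)
    (hτcont : Continuous τ) (hσcont : Continuous σ)
    (hτlow : ∀ x, 1 / C ≤ ‖τ x‖) (hσlow : ∀ x, 1 / C ≤ ‖σ x‖) :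
    ∀ v : EuclideanSpace ℝ (Fin 3),
      ‖Amap τ v - Amap σ v‖ ≤
        2 * C ^ 2 * L2norm (τ + σ) * L2norm (τ - σ) * ‖v‖ := by
  intro v
  have hr : 0 < 1 / C := one_div_pos.2 hC
  have hc : (0 : ℝ) ≤ 1 / (2 * π) := by positivity
  have hpoint : ∀ x, ‖(inner ℝ (σ x) v / ‖σ x‖ ^ 2) • σ x -
      (inner ℝ (τ x) v / ‖τ x‖ ^ 2) • τ x‖ ≤
        2 * C ^ 2 * ‖v‖ * (‖(τ + σ) x‖ * ‖(τ - σ) x‖) := fun x ↦ by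
    have := norm_inner_div_norm_sq_smul_sub_le hr (hσlow x) (hτlow x) v
    rw [add_comm, norm_sub_rev (σ x), one_div, inv_pow, div_inv_eq_mul] at this
    simpa only [Pi.add_apply, Pi.sub_apply, mul_comm, mul_left_comm, mul_assoc] using this
  calc ‖Amap τ v - Amap σ v‖
      = (1 / (2 * π)) * ‖∫ x in (-π)..π, ((inner ℝ (σ x) v / ‖σ x‖ ^ 2) • σ x -
          (inner ℝ (τ x) v / ‖τ x‖ ^ 2) • τ x)‖ := by
        rw [Amap_sub_Amap hτcont hσcont (fun x ↦ norm_pos_iff.1 (hr.trans_le (hτlow x)))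
          (fun x ↦ norm_pos_iff.1 (hr.trans_le (hσlow x))), norm_smul, Real.norm_of_nonneg hc]
    _ ≤ (1 / (2 * π)) * ∫ x in (-π)..π, 2 * C ^ 2 * ‖v‖ * (‖(τ + σ) x‖ * ‖(τ - σ) x‖) := by
        gcongr
        refine intervalIntegral.norm_integral_le_of_norm_le (by linarith [pi_pos])
          (.of_forall fun x _ ↦ hpoint x) ?_
        exact (continuous_const.mul ((hτcont.add hσcont).norm.mul
          (hτcont.sub hσcont).norm)).intervalIntegrable _ _
    _ = 2 * C ^ 2 * ‖v‖ * ((1 / (2 * π)) * ∫ x in (-π)..π, ‖(τ + σ) x‖ * ‖(τ - σ) x‖) := by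
        rw [intervalIntegral.integral_const_mul]
        ring
    _ ≤ 2 * C ^ 2 * ‖v‖ * (L2norm (τ + σ) * L2norm (τ - σ)) :=
        mul_le_mul_of_nonneg_left (average_norm_mul_norm_le_L2norm_mul_L2norm
          (hτcont.add hσcont) (hτcont.sub hσcont)) (by positivity)
    _ = 2 * C ^ 2 * L2norm (τ + σ) * L2norm (τ - σ) * ‖v‖ := by ring

/-- If `τ, σ ∈ H¹(𝕋¹;ℝ³)` satisfy `min|τ| ≥ 1/C`, `min|σ| ≥ 1/C`, then
`‖A_τ - A_σ‖_op ≤ 2C²‖τ+σ‖_{L²}‖τ-σ‖_{L²}`. -/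
theorem stmt9 (τ σ : ℝ → EuclideanSpace ℝ (Fin 3)) (C : ℝ) (hC : 0 < C)
    (hτcont : Continuous τ) (hσcont : Continuous σ)
    (hτper : Function.Periodic τ (2 * π)) (hσper : Function.Periodic σ (2 * π))
    (hτlow : ∀ x, 1 / C ≤ ‖τ x‖) (hσlow : ∀ x, 1 / C ≤ ‖σ x‖) :
    ∀ v : EuclideanSpace ℝ (Fin 3),
      ‖Amap τ v - Amap σ v‖ ≤
        2 * C ^ 2 * L2norm (τ + σ) * L2norm (τ - σ) * ‖v‖ :=
  stmt9_general τ σ C hC hτcont hσcont hτlow hσlow
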